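/- arXiv:1809.10100 — 4 statements merged into one kernel-verified Lean document; each statement's English description precedes it below -/
import Mathlib

section
/- Let x ∈ ℂ^E satisfy Re(x_e) > 0 for all e ∈ E, and suppose the block D of the weighted Laplacian L(x) is invertible, so that the response matrix Λ(x) = A − B₀ D⁻¹ B₀ᵀ is defined. Then the real part of Λ(x) is positive semidefinite: uᵀ·Re(Λ(x))·u ≥ 0 for every real vector u ∈ ℝ^B. -/
open scoped BigOperators Classical

noncomputable section

namespace DirichletPaper

variable {V : Type*} [Fintype V] [DecidableEq V]

/-- `(Γ, B)` is a network: `Γ` is a connected finite simple graph, there are at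
least two boundary nodes, and no edge of `Γ` joins two boundary nodes. -/
structure IsNetwork (Γ : SimpleGraph V) (B : Finset V) : Prop where
  connected : Γ.Connected
  two_le_card : 2 ≤ B.card
  boundary_independent : ∀ i ∈ B, ∀ j ∈ B, ¬ Γ.Adj i j

/-- A crossing of the network `(Γ, B)`: the edge set of a simple path in `Γ`
whose two endpoints are distinct boundary nodes and all of whose internal
vertices are interior (i.e. lie in `V ∖ B`). -/
def IsCrossing (Γ : SimpleGraph V) (B : Finset V) (X : Finset (Sym2 V)) : Prop :=
  ∃ (i j : V) (p : Γ.Walk i j), p.IsPath ∧ i ∈ B ∧ j ∈ B ∧ i ≠ j ∧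
    (∀ v ∈ p.support, v ≠ i → v ≠ j → v ∉ B) ∧ X = p.edges.toFinset

/-- A grove of the network `(Γ, B)`: an acyclic edge set `F ⊆ E` such that every
interior vertex is incident to an edge of `F` and every connected component of
the forest `F` contains a boundary node. -/
def IsGrove (Γ : SimpleGraph V) (B : Finset V) (F : Finset (Sym2 V)) : Prop :=
  (F : Set (Sym2 V)) ⊆ Γ.edgeSet ∧
  (SimpleGraph.fromEdgeSet (F : Set (Sym2 V))).IsAcyclic ∧
  (∀ v : V, v ∉ B → ∃ e ∈ F, v ∈ e) ∧
  (∀ v : V, ∃ b ∈ B, (SimpleGraph.fromEdgeSet (F : Set (Sym2 V))).Reachable v b)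

/-- `Σ₁`: groves containing exactly one crossing. -/
def Sigma1 (Γ : SimpleGraph V) (B : Finset V) (F : Finset (Sym2 V)) : Prop :=
  IsGrove Γ B F ∧ ∃! C : Finset (Sym2 V), IsCrossing Γ B C ∧ C ⊆ F

/-- `Σ₀`: groves containing no crossing. -/
def Sigma0 (Γ : SimpleGraph V) (B : Finset V) (F : Finset (Sym2 V)) : Prop :=
  IsGrove Γ B F ∧ ∀ C : Finset (Sym2 V), IsCrossing Γ B C → ¬ C ⊆ F

/-- The generating function `∑_{F ∈ S} ∏_{e ∈ F} x_e`. -/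
def groveSum (R : Type*) [CommRing R] (S : Finset (Sym2 V) → Prop) (x : Sym2 V → R) : R :=
  ∑ F ∈ Finset.univ.filter S, ∏ e ∈ F, x e

/-- `P₀(x) = ∑_{F ∈ Σ₀} ∏_{e ∈ F} x_e`. -/
def P0 (R : Type*) [CommRing R] (Γ : SimpleGraph V) (B : Finset V) (x : Sym2 V → R) : R :=
  groveSum R (Sigma0 Γ B) x

/-- `P₁(x) = ∑_{F ∈ Σ₁} ∏_{e ∈ F} x_e`. -/
def P1 (R : Type*) [CommRing R] (Γ : SimpleGraph V) (B : Finset V) (x : Sym2 V → R) : R :=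
  groveSum R (Sigma1 Γ B) x

/-- The ground set `Ē = E ∪ {ê}` of the Dirichlet matroid, realized inside
`Option (Sym2 V)`, with `ê = none` and an edge `e` realized as `some e`. -/
def ground (Γ : SimpleGraph V) : Finset (Option (Sym2 V)) :=
  insert none ((Finset.univ.filter (· ∈ Γ.edgeSet)).image some)

/-- Independent sets of the Dirichlet matroid `M(N)`: subsets of `F` for some
`F ∈ Σ₁`, or subsets of `F ∪ {ê}` for some `F ∈ Σ₀`. -/
def Indep (Γ : SimpleGraph V) (B : Finset V) (X : Finset (Option (Sym2 V))) : Prop :=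
  (∃ F, Sigma1 Γ B F ∧ X ⊆ F.image some) ∨
  (∃ F, Sigma0 Γ B F ∧ X ⊆ insert none (F.image some))

/-- Bases of `M(N)`: maximal independent sets. -/
def IsBasis (Γ : SimpleGraph V) (B : Finset V) (X : Finset (Option (Sym2 V))) : Prop :=
  Indep Γ B X ∧ ∀ Y, Indep Γ B Y → X ⊆ Y → Y = X

/-- Circuits of `M(N)`: minimal dependent subsets of the ground set. -/
def IsCircuit (Γ : SimpleGraph V) (B : Finset V) (X : Finset (Option (Sym2 V))) : Prop :=
  X ⊆ ground Γ ∧ ¬ Indep Γ B X ∧ ∀ Y ⊂ X, Indep Γ B Y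

/-- The rank function of `M(N)`. -/
def rk (Γ : SimpleGraph V) (B : Finset V) (X : Finset (Option (Sym2 V))) : ℕ :=
  (X.powerset.filter (Indep Γ B)).sup Finset.card

/-- Independent sets of the graphic matroid of `G`: edge sets of forests. -/
def IndepG (G : SimpleGraph V) (X : Finset (Sym2 V)) : Prop :=
  (X : Set (Sym2 V)) ⊆ G.edgeSet ∧ (SimpleGraph.fromEdgeSet (X : Set (Sym2 V))).IsAcyclic

/-- Circuits of the graphic matroid of `G`. -/
def IsCircuitG (G : SimpleGraph V) (X : Finset (Sym2 V)) : Prop :=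
  (X : Set (Sym2 V)) ⊆ G.edgeSet ∧ ¬ IndepG G X ∧ ∀ Y ⊂ X, IndepG G Y

/-- The edge set of `G` as a `Finset`. -/
def edgeFinset' (G : SimpleGraph V) : Finset (Sym2 V) :=
  Finset.univ.filter (· ∈ G.edgeSet)

/-- The rank function of the graphic matroid of `G`. -/
def rkG (G : SimpleGraph V) (X : Finset (Sym2 V)) : ℕ :=
  (X.powerset.filter (IndepG G)).sup Finset.card

/-- The characteristic polynomial `χ(λ) = ∑_{X ⊆ S} (-1)^{|X|} λ^{r(S) - r(X)}`
of a matroid with ground set `S` and rank function `r`. -/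
def charPolyOf {α : Type*} [DecidableEq α] (S : Finset α) (r : Finset α → ℕ) : Polynomial ℤ :=
  ∑ X ∈ S.powerset, Polynomial.C ((-1 : ℤ) ^ X.card) * Polynomial.X ^ (r S - r X)

/-- The graph `Γ̂` obtained from `Γ` by adding an edge between each pair of
distinct boundary nodes. -/
def hatGraph (Γ : SimpleGraph V) (B : Finset V) : SimpleGraph V where
  Adj i j := Γ.Adj i j ∨ (i ∈ B ∧ j ∈ B ∧ i ≠ j)
  symm := by
    constructor
    intro i j h
    rcases h with h | ⟨hi, hj, hne⟩
    · exact Or.inl h.symm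
    · exact Or.inr ⟨hj, hi, hne.symm⟩
  loopless := by
    constructor
    intro i h
    rcases h with h | ⟨-, -, hne⟩
    · exact Γ.irrefl h
    · exact hne rfl

/-- The weighted Laplacian matrix of `Γ` with edge weights `x`. -/
def lap (Γ : SimpleGraph V) (x : Sym2 V → ℂ) : Matrix V V ℂ := fun i j =>
  if i = j then ∑ k ∈ Finset.univ.filter (fun k => Γ.Adj i k), x s(i, k)
  else if Γ.Adj i j then -x s(i, j) else 0

/-- The boundary-boundary block `A` of the Laplacian. -/
def lapA (Γ : SimpleGraph V) (B : Finset V) (x : Sym2 V → ℂ) :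
    Matrix {v : V // v ∈ B} {v : V // v ∈ B} ℂ :=
  (lap Γ x).submatrix Subtype.val Subtype.val

/-- The interior-interior block `D` of the Laplacian. -/
def lapD (Γ : SimpleGraph V) (B : Finset V) (x : Sym2 V → ℂ) :
    Matrix {v : V // v ∉ B} {v : V // v ∉ B} ℂ :=
  (lap Γ x).submatrix Subtype.val Subtype.val

/-- The boundary-interior block `B₀` of the Laplacian. -/
def lapB (Γ : SimpleGraph V) (B : Finset V) (x : Sym2 V → ℂ) :
    Matrix {v : V // v ∈ B} {v : V // v ∉ B} ℂ :=
  (lap Γ x).submatrix Subtype.val Subtype.val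

/-- The response matrix `Λ(x) = A - B₀ D⁻¹ B₀ᵀ` of the network. -/
def response (Γ : SimpleGraph V) (B : Finset V) (x : Sym2 V → ℂ) :
    Matrix {v : V // v ∈ B} {v : V // v ∈ B} ℂ :=
  lapA Γ B x - lapB Γ B x * (lapD Γ B x)⁻¹ * (lapB Γ B x).transpose

/-- `P₀` as a real multivariate polynomial in the variables `x_e`. -/
def P0mv (Γ : SimpleGraph V) (B : Finset V) : MvPolynomial (Sym2 V) ℝ :=
  ∑ F ∈ Finset.univ.filter (Sigma0 Γ B), ∏ e ∈ F, MvPolynomial.X e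

/-- `P₁` as a real multivariate polynomial in the variables `x_e`. -/
def P1mv (Γ : SimpleGraph V) (B : Finset V) : MvPolynomial (Sym2 V) ℝ :=
  ∑ F ∈ Finset.univ.filter (Sigma1 Γ B), ∏ e ∈ F, MvPolynomial.X e

/-- `E_{ef}(g, h) = ∂_e g · ∂_f h + ∂_f g · ∂_e h - g · ∂_e ∂_f h - ∂_e ∂_f g · h`. -/
def Emix {σ : Type*} (e f : σ) (g h : MvPolynomial σ ℝ) : MvPolynomial σ ℝ :=
  MvPolynomial.pderiv e g * MvPolynomial.pderiv f h +
    MvPolynomial.pderiv f g * MvPolynomial.pderiv e h -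
    g * MvPolynomial.pderiv e (MvPolynomial.pderiv f h) -
    MvPolynomial.pderiv e (MvPolynomial.pderiv f g) * h

/-- `Δ_{ef}(g) = ∂_e g · ∂_f g - g · ∂_e ∂_f g`, the Rayleigh difference. -/
def Delta {σ : Type*} (e f : σ) (g : MvPolynomial σ ℝ) : MvPolynomial σ ℝ :=
  MvPolynomial.pderiv e g * MvPolynomial.pderiv f g -
    g * MvPolynomial.pderiv e (MvPolynomial.pderiv f g)

/-- The block of the network containing the vertex `i`: all `j ∈ V` reachable
from `i` by a path all of whose vertices except possibly the final one are
interior. -/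
def blockOf (Γ : SimpleGraph V) (B : Finset V) (i : V) : Finset V :=
  Finset.univ.filter (fun j => ∃ p : Γ.Walk i j, p.IsPath ∧ ∀ v ∈ p.support, v ≠ j → v ∉ B)

/-!
Eliminating the interior is a Schur complement: extending the boundary values `u` by
`w = -D⁻¹ B₀ᵀ u` gives a potential `φ` with `L φ = 0` on the interior and `L φ = Λ u` on the
boundary, so `u* Λ u = φ* L φ`. Pairing the two orientations of every edge turns `2 φ* L φ` into
`∑ x_{ij} |φ_i - φ_j|²`, whose real part is nonnegative when every `Re x_e ≥ 0`.
-/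

end DirichletPaper

namespace Matrix

variable {m n R : Type*} [Fintype m] [Fintype n] [CommRing R]

theorem dotProduct_submatrix_mulVec_equiv (M : Matrix n n R) (e : m ≃ n) (v w : m → R) :
    v ⬝ᵥ M.submatrix e e *ᵥ w = (v ∘ e.symm) ⬝ᵥ M *ᵥ (w ∘ e.symm) := by
  rw [submatrix_mulVec_equiv, comp_equiv_symm_dotProduct]

section Schur

variable [DecidableEq n]

def harmonicExt (C : Matrix n m R) (D : Matrix n n R) (u : m → R) : m ⊕ n → R :=
  Sum.elim u (-(D⁻¹ *ᵥ C *ᵥ u))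

theorem fromBlocks_mulVec_harmonicExt (A : Matrix m m R) (B : Matrix m n R) (C : Matrix n m R)
    (D : Matrix n n R) (hD : IsUnit D.det) (u : m → R) :
    fromBlocks A B C D *ᵥ harmonicExt C D u = Sum.elim ((A - B * D⁻¹ * C) *ᵥ u) 0 := by
  simp only [harmonicExt, fromBlocks_mulVec, Sum.elim_comp_inl, Sum.elim_comp_inr, mulVec_neg,
    mulVec_mulVec, mul_nonsing_inv_cancel_left D C hD, add_neg_cancel, sub_eq_add_neg, add_mulVec,
    neg_mulVec, Matrix.mul_assoc]

theorem dotProduct_fromBlocks_mulVec_harmonicExt (A : Matrix m m R) (B : Matrix m n R)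
    (C : Matrix n m R) (D : Matrix n n R) (hD : IsUnit D.det) (y : m ⊕ n → R)
    (u : m → R) :
    y ⬝ᵥ fromBlocks A B C D *ᵥ harmonicExt C D u = (y ∘ Sum.inl) ⬝ᵥ (A - B * D⁻¹ * C) *ᵥ u := by
  rw [fromBlocks_mulVec_harmonicExt A B C D hD, ← Sum.elim_comp_inl_inr y,
    sumElim_dotProduct_sumElim, dotProduct_zero, add_zero, Sum.elim_comp_inl]

end Schur

theorem re_star_dotProduct_mulVec_ofReal (M : Matrix m m ℂ) (u : m → ℝ) :
    (star (Complex.ofReal ∘ u) ⬝ᵥ M *ᵥ (Complex.ofReal ∘ u)).re =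
      ∑ i, ∑ j, u i * (M i j).re * u j := by
  simp [dotProduct, mulVec, Complex.re_sum, Finset.mul_sum, mul_assoc]

end Matrix

namespace DirichletPaper

variable {V : Type*} [Fintype V] [DecidableEq V]

open Matrix

theorem lap_apply (Γ : SimpleGraph V) (x : Sym2 V → ℂ) (i j : V) :
    lap Γ x i j = (if i = j then ∑ k, if Γ.Adj i k then x s(i, k) else 0 else 0) -
      if Γ.Adj i j then x s(i, j) else 0 := by
  by_cases h : i = j
  · subst h; simp [lap, Finset.sum_filter]
  · simp only [lap, if_neg h]
    split_ifs <;> simp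

theorem lap_mulVec_apply (Γ : SimpleGraph V) (x : Sym2 V → ℂ) (φ : V → ℂ) (v : V) :
    (lap Γ x *ᵥ φ) v = ∑ j, if Γ.Adj v j then x s(v, j) * (φ v - φ j) else 0 := by
  simp only [mulVec, dotProduct, lap_apply, sub_mul, ite_mul, zero_mul, Finset.sum_sub_distrib,
    Finset.sum_ite_eq, Finset.mem_univ, if_true, Finset.sum_mul]
  rw [← Finset.sum_sub_distrib]
  refine Finset.sum_congr rfl fun j _ => ?_
  split_ifs <;> ring

theorem lap_transpose (Γ : SimpleGraph V) (x : Sym2 V → ℂ) : (lap Γ x)ᵀ = lap Γ x := by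
  ext i j
  rcases eq_or_ne i j with rfl | h
  · rfl
  · simp [lap_apply, h, h.symm, Γ.adj_comm, Sym2.eq_swap]

theorem two_mul_star_dotProduct_lap_mulVec (Γ : SimpleGraph V) (x : Sym2 V → ℂ) (φ : V → ℂ) :
    2 * (star φ ⬝ᵥ lap Γ x *ᵥ φ) =
      ∑ v, ∑ j, if Γ.Adj v j then x s(v, j) * (Complex.normSq (φ v - φ j) : ℂ) else 0 := by
  have hQ : star φ ⬝ᵥ lap Γ x *ᵥ φ =
      ∑ v, ∑ j, if Γ.Adj v j then x s(v, j) * (star (φ v) * (φ v - φ j)) else 0 := by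
    simp only [dotProduct, lap_mulVec_apply, Finset.mul_sum, Pi.star_apply]
    refine Fintype.sum_congr _ _ fun v => Fintype.sum_congr _ _ fun j => ?_
    split_ifs <;> ring
  have hQ_swap : star φ ⬝ᵥ lap Γ x *ᵥ φ =
      ∑ v, ∑ j, if Γ.Adj v j then x s(v, j) * (star (φ j) * (φ j - φ v)) else 0 := by
    rw [hQ, Finset.sum_comm]
    simp only [Γ.adj_comm, Sym2.eq_swap]
  rw [two_mul]
  nth_rw 1 [hQ]
  rw [hQ_swap, ← Finset.sum_add_distrib]
  refine Fintype.sum_congr _ _ fun v => ?_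
  rw [← Finset.sum_add_distrib]
  refine Fintype.sum_congr _ _ fun j => ?_
  split_ifs
  · rw [Complex.normSq_eq_conj_mul_self, map_sub, ← Complex.star_def]
    ring
  · simp

theorem re_star_dotProduct_lap_mulVec_nonneg (Γ : SimpleGraph V) {x : Sym2 V → ℂ}
    (hx : ∀ e ∈ Γ.edgeSet, 0 ≤ (x e).re) (φ : V → ℂ) :
    0 ≤ (star φ ⬝ᵥ lap Γ x *ᵥ φ).re := by
  have h2 : 0 ≤ (2 * (star φ ⬝ᵥ lap Γ x *ᵥ φ)).re := by
    rw [two_mul_star_dotProduct_lap_mulVec, Complex.re_sum]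
    refine Finset.sum_nonneg fun v _ => ?_
    rw [Complex.re_sum]
    refine Finset.sum_nonneg fun j _ => ?_
    split_ifs with h
    · rw [Complex.re_mul_ofReal]
      exact mul_nonneg (hx _ h) (Complex.normSq_nonneg _)
    · simp
  simpa using h2

theorem lap_submatrix_sumCompl (Γ : SimpleGraph V) (B : Finset V) (x : Sym2 V → ℂ) :
    (lap Γ x).submatrix (Equiv.sumCompl (· ∈ B)) (Equiv.sumCompl (· ∈ B)) =
      fromBlocks (lapA Γ B x) (lapB Γ B x) (lapB Γ B x)ᵀ (lapD Γ B x) := by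
  ext (i | i) (j | j)
  · rfl
  · rfl
  · exact congr_fun₂ (lap_transpose Γ x).symm i j
  · rfl

theorem response_re_posSemidef_general
    (Γ : SimpleGraph V) (B : Finset V)
    (x : Sym2 V → ℂ) (hx : ∀ e ∈ Γ.edgeSet, 0 < (x e).re)
    (hD : IsUnit (lapD Γ B x).det)
    (u : {v : V // v ∈ B} → ℝ) :
    0 ≤ ∑ i, ∑ j, u i * (response Γ B x i j).re * u j := by
  set e := Equiv.sumCompl (· ∈ B)
  set φ := harmonicExt (lapB Γ B x)ᵀ (lapD Γ B x) (Complex.ofReal ∘ u)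
  have hφ : star φ ⬝ᵥ (lap Γ x).submatrix e e *ᵥ φ =
      star (Complex.ofReal ∘ u) ⬝ᵥ response Γ B x *ᵥ (Complex.ofReal ∘ u) := by
    rw [lap_submatrix_sumCompl, dotProduct_fromBlocks_mulVec_harmonicExt _ _ _ _ hD]
    rfl
  rw [← re_star_dotProduct_mulVec_ofReal, ← hφ, dotProduct_submatrix_mulVec_equiv]
  exact re_star_dotProduct_lap_mulVec_nonneg Γ (fun a ha => (hx a ha).le) (φ ∘ e.symm)

/-- **The real part of the response matrix is positive semidefinite**: if
`Re x_e > 0` for all edges `e` and the interior block `D` of the weighted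
Laplacian is invertible, then `uᵀ · Re(Λ(x)) · u ≥ 0` for every real vector
`u ∈ ℝ^B`. -/
theorem response_re_posSemidef
    (Γ : SimpleGraph V) (B : Finset V) (hN : IsNetwork Γ B)
    (x : Sym2 V → ℂ) (hx : ∀ e ∈ Γ.edgeSet, 0 < (x e).re)
    (hD : IsUnit (lapD Γ B x).det)
    (u : {v : V // v ∈ B} → ℝ) :
    0 ≤ ∑ i, ∑ j, u i * (response Γ B x i j).re * u j :=
  response_re_posSemidef_general Γ B x hx hD u

end DirichletPaper
end
end

section
/- Bases of the Dirichlet matroid: a set X ⊆ Ē is a basis (i.e., a maximal independent set) of M(N) if and only if either X ∈ Σ₁, or X = F ∪ {ê} for some F ∈ Σ₀. -/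
/-!
Let `F` be a grove and `e = ab ∉ F` an edge such that `F ∪ {e}` is still a forest. Then `a` and
`b` lie in different components of `F`, and each component contains a boundary node, so the
paths from `a` and from `b` to the first boundary nodes they meet, joined through `e`, form a
crossing using `e`. Consequently a grove properly contained in a forest `G` misses some crossing
of `G`: the groves in `Σ₀` form an antichain, so do those in `Σ₁` (a crossing of the smaller one
would be a second crossing of the larger), and no grove of `Σ₁` lies in one of `Σ₀`. Hence the
sets `F` with `F ∈ Σ₁` and `F ∪ {ê}` with `F ∈ Σ₀` are exactly the maximal independent sets.
-/

open scoped BigOperators Classical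

noncomputable section

namespace SimpleGraph

variable {V : Type*} {G : SimpleGraph V}

theorem Reachable.exists_isPath_first_mem [DecidableEq V] {B : Set V} {a c : V}
    (h : G.Reachable a c) (hc : c ∈ B) :
    ∃ i ∈ B, ∃ q : G.Walk a i, q.IsPath ∧ ∀ v ∈ q.support, v ≠ i → v ∉ B := by
  obtain ⟨p⟩ := h
  induction p with
  | nil => exact ⟨_, hc, .nil, by simp, by simp⟩
  | @cons u v w huv p ih =>
    by_cases hu : u ∈ B
    · exact ⟨u, hu, .nil, by simp, by simp⟩
    obtain ⟨i, hiB, q, -, hq⟩ := ih hc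
    refine ⟨i, hiB, (Walk.cons huv q).bypass, Walk.bypass_isPath _, fun x hx hxi => ?_⟩
    rcases List.mem_cons.mp (Walk.support_bypass_subset_support _ hx) with rfl | hx
    · exact hu
    · exact hq x hx hxi

theorem not_reachable_of_isAcyclic_insert {F : Set (Sym2 V)} {a b : V} (hab : a ≠ b)
    (hF : s(a, b) ∉ F) (hacyc : (fromEdgeSet (insert s(a, b) F)).IsAcyclic) :
    ¬ (fromEdgeSet F).Reachable a b := by
  have hbridge := isAcyclic_iff_forall_adj_isBridge.mp hacyc (v := a) (w := b) (by simpa using hab)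
  refine fun h => isBridge_iff.mp hbridge (h.mono ?_)
  intro x y hxy
  simp only [fromEdgeSet_adj, deleteEdges_adj, Set.mem_insert_iff, Set.mem_singleton_iff] at hxy ⊢
  exact ⟨⟨Or.inr hxy.1, hxy.2⟩, fun h => hF (h ▸ hxy.1)⟩

end SimpleGraph

namespace DirichletPaper

open SimpleGraph

theorem IsGrove.indepG {V : Type*} {Γ : SimpleGraph V} {B : Finset V} {F : Finset (Sym2 V)}
    (hF : IsGrove Γ B F) : IndepG Γ F :=
  ⟨hF.1, hF.2.1⟩

section

variable {V : Type*} [DecidableEq V] {Γ : SimpleGraph V} {B : Finset V}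

theorem isCrossing_edges_append_cons {a b i j : V} (hab : Γ.Adj a b)
    {p : Γ.Walk a i} {q : Γ.Walk b j} (hp : p.IsPath) (hq : q.IsPath) (hi : i ∈ B) (hj : j ∈ B)
    (hpB : ∀ v ∈ p.support, v ≠ i → v ∉ B) (hqB : ∀ v ∈ q.support, v ≠ j → v ∉ B)
    (hpq : p.support.Disjoint q.support) :
    IsCrossing Γ B (p.reverse.append (.cons hab q)).edges.toFinset := by
  have hsupp : (p.reverse.append (.cons hab q)).support = p.support.reverse ++ q.support := by
    simp [Walk.support_append]
  have hij : i ≠ j := by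
    rintro rfl
    exact hpq p.end_mem_support q.end_mem_support
  refine ⟨i, j, _, ?_, hi, hj, hij, fun v hv hvi hvj => ?_, rfl⟩
  · rw [Walk.isPath_def, hsupp]
    exact (List.nodup_reverse.mpr hp.support_nodup).append hq.support_nodup
      fun v hvp hvq => hpq (List.mem_reverse.mp hvp) hvq
  · rw [hsupp, List.mem_append, List.mem_reverse] at hv
    exact hv.elim (hpB v · hvi) (hqB v · hvj)

theorem IsGrove.exists_isCrossing_mem_of_insert {F : Finset (Sym2 V)} (hF : IsGrove Γ B F)
    {e : Sym2 V} (he : e ∈ Γ.edgeSet) (heF : e ∉ F)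
    (hacyc : (fromEdgeSet (insert e F : Set (Sym2 V))).IsAcyclic) :
    ∃ C, IsCrossing Γ B C ∧ C ⊆ insert e F ∧ e ∈ C := by
  obtain ⟨hFΓ, -, -, hreach⟩ := hF
  induction e using Sym2.ind with | _ a b => ?_
  have hab : Γ.Adj a b := he
  set H := fromEdgeSet (F : Set (Sym2 V))
  have hedges {u v : V} (r : H.Walk u v) : ∀ x ∈ r.edges, x ∈ F := fun x hx =>
    (edgeSet_fromEdgeSet (F : Set (Sym2 V)) ▸ r.edges_subset_edgeSet hx).1
  have hsplit : ¬ H.Reachable a b :=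
    not_reachable_of_isAcyclic_insert hab.ne heF (by simpa using hacyc)
  obtain ⟨a', ha', ha'r⟩ := hreach a
  obtain ⟨i, hi, p, hp, hpB⟩ := ha'r.exists_isPath_first_mem (B := (B : Set V)) ha'
  obtain ⟨b', hb', hb'r⟩ := hreach b
  obtain ⟨j, hj, q, hq, hqB⟩ := hb'r.exists_isPath_first_mem (B := (B : Set V)) hb'
  have hpΓ x hx : x ∈ Γ.edgeSet := hFΓ (hedges p x hx)
  have hqΓ x hx : x ∈ Γ.edgeSet := hFΓ (hedges q x hx)
  refine ⟨_, isCrossing_edges_append_cons hab (hp.transfer hpΓ) (hq.transfer hqΓ) hi hj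
    (by simpa using hpB) (by simpa using hqB) ?_, fun x hx => ?_, by simp⟩
  · simp only [Walk.support_transfer]
    exact fun v hvp hvq => hsplit ⟨(p.takeUntil v hvp).append (q.takeUntil v hvq).reverse⟩
  · simp only [List.mem_toFinset, Walk.edges_append, Walk.edges_reverse, Walk.edges_cons,
      Walk.edges_transfer, List.mem_append, List.mem_reverse, List.mem_cons] at hx
    rcases hx with hx | rfl | hx
    · exact Finset.mem_insert_of_mem (hedges p x hx)
    · exact Finset.mem_insert_self _ _
    · exact Finset.mem_insert_of_mem (hedges q x hx)

theorem IsGrove.exists_isCrossing_not_subset {F G : Finset (Sym2 V)} (hF : IsGrove Γ B F)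
    (hG : IndepG Γ G) (hFG : F ⊂ G) : ∃ C, IsCrossing Γ B C ∧ C ⊆ G ∧ ¬ C ⊆ F := by
  obtain ⟨e, heG, heF⟩ := Finset.exists_of_ssubset hFG
  have hinsert : insert e F ⊆ G := Finset.insert_subset heG hFG.subset
  have hacyc : (fromEdgeSet (insert e F : Set (Sym2 V))).IsAcyclic :=
    hG.2.anti (fromEdgeSet_mono (by exact_mod_cast hinsert))
  obtain ⟨C, hC, hCsub, heC⟩ := hF.exists_isCrossing_mem_of_insert (hG.1 heG) heF hacyc
  exact ⟨C, hC, hCsub.trans hinsert, fun hCF => heF (hCF heC)⟩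

theorem Sigma0.eq_of_subset {F G : Finset (Sym2 V)} (hF : Sigma0 Γ B F) (hG : Sigma0 Γ B G)
    (hFG : F ⊆ G) : F = G := by
  by_contra hne
  obtain ⟨C, hC, hCG, -⟩ :=
    hF.1.exists_isCrossing_not_subset hG.1.indepG (hFG.ssubset_of_ne hne)
  exact hG.2 C hC hCG

theorem Sigma1.eq_of_subset {F G : Finset (Sym2 V)} (hF : Sigma1 Γ B F) (hG : Sigma1 Γ B G)
    (hFG : F ⊆ G) : F = G := by
  by_contra hne
  obtain ⟨C, hC, hCG, hCF⟩ :=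
    hF.1.exists_isCrossing_not_subset hG.1.indepG (hFG.ssubset_of_ne hne)
  obtain ⟨D, ⟨hD, hDF⟩, -⟩ := hF.2
  have hDC : D = C := hG.2.unique ⟨hD, hDF.trans hFG⟩ ⟨hC, hCG⟩
  exact hCF (hDC ▸ hDF)

theorem Sigma1.not_subset_of_sigma0 {F G : Finset (Sym2 V)} (hF : Sigma1 Γ B F)
    (hG : Sigma0 Γ B G) : ¬ F ⊆ G := by
  obtain ⟨C, ⟨hC, hCF⟩, -⟩ := hF.2
  exact fun hFG => hG.2 C hC (hCF.trans hFG)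

theorem image_some_subset_insert_none {F G : Finset (Sym2 V)} :
    F.image some ⊆ insert none (G.image some) ↔ F ⊆ G := by
  rw [Finset.subset_insert_iff_of_notMem (by simp),
    Finset.image_subset_image_iff (Option.some_injective _)]

theorem isBasis_image_some {F : Finset (Sym2 V)} (hF : Sigma1 Γ B F) :
    IsBasis Γ B (F.image some) := by
  refine ⟨.inl ⟨F, hF, subset_rfl⟩, ?_⟩
  rintro Y (⟨G, hG, hYG⟩ | ⟨G, hG, hYG⟩) hFY
  · have hFG : F ⊆ G := (Finset.image_subset_image_iff (Option.some_injective _)).mp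
      (hFY.trans hYG)
    obtain rfl := hF.eq_of_subset hG hFG
    exact hYG.antisymm hFY
  · exact absurd (image_some_subset_insert_none.mp (hFY.trans hYG)) (hF.not_subset_of_sigma0 hG)

theorem isBasis_insert_none_image_some {F : Finset (Sym2 V)} (hF : Sigma0 Γ B F) :
    IsBasis Γ B (insert none (F.image some)) := by
  refine ⟨.inr ⟨F, hF, subset_rfl⟩, ?_⟩
  rintro Y (⟨G, -, hYG⟩ | ⟨G, hG, hYG⟩) hFY
  · simpa using hYG (hFY (Finset.mem_insert_self _ _))
  · have hFG : F ⊆ G := image_some_subset_insert_none.mp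
      (((Finset.subset_insert _ _).trans hFY).trans hYG)
    obtain rfl := hF.eq_of_subset hG hFG
    exact hYG.antisymm hFY

end

variable {V : Type*} [Fintype V] [DecidableEq V]

theorem basis_characterization_general
    (Γ : SimpleGraph V) (B : Finset V)
    (X : Finset (Option (Sym2 V))) :
    IsBasis Γ B X ↔
      ((∃ F, Sigma1 Γ B F ∧ X = F.image some) ∨
       (∃ F, Sigma0 Γ B F ∧ X = insert none (F.image some))) := by
  constructor
  · rintro ⟨⟨F, hF, hXF⟩ | ⟨F, hF, hXF⟩, hmax⟩
    · exact .inl ⟨F, hF, (hmax _ (.inl ⟨F, hF, subset_rfl⟩) hXF).symm⟩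
    · exact .inr ⟨F, hF, (hmax _ (.inr ⟨F, hF, subset_rfl⟩) hXF).symm⟩
  · rintro (⟨F, hF, rfl⟩ | ⟨F, hF, rfl⟩)
    · exact isBasis_image_some hF
    · exact isBasis_insert_none_image_some hF

/-- **Bases of the Dirichlet matroid**: a set `X ⊆ Ē` is a basis (maximal
independent set) of `M(N)` iff `X ∈ Σ₁` or `X = F ∪ {ê}` for some `F ∈ Σ₀`. -/
theorem basis_characterization
    (Γ : SimpleGraph V) (B : Finset V) (hN : IsNetwork Γ B)
    (X : Finset (Option (Sym2 V))) (hX : X ⊆ ground Γ) :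
    IsBasis Γ B X ↔
      ((∃ F, Sigma1 Γ B F ∧ X = F.image some) ∨
       (∃ F, Sigma0 Γ B F ∧ X = insert none (F.image some))) :=
  basis_characterization_general Γ B X

end DirichletPaper
end
end

section
/- If |B| = 2, then the Dirichlet matroid M(N) is isomorphic to the graphic matroid M(Γ̂), where Γ̂ is the graph obtained from Γ by adding a single edge ē between the two boundary nodes. Explicitly, the bijection Ē → E(Γ̂) fixing every edge of E and sending ê to ē is a matroid isomorphism: a set X ⊆ Ē is independent in M(N) if and only if its image in E(Γ̂) is the edge set of a forest in Γ̂. -/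
open scoped BigOperators Classical

noncomputable section

/-! With `B = {b₁, b₂}` a crossing is just a `b₁`–`b₂` path, so a grove lies in `Σ₁` or in `Σ₀`
according to whether it connects `b₁` and `b₂`; in a forest that crossing is unique. Hence `Σ₁`
consists of the spanning trees of `Γ`, and `F ∈ Σ₀` iff `F ∪ {ē}` is a spanning tree of `Γ̂`.
A set not containing `ê` is therefore independent iff it is a forest of `Γ` (extend it to a
spanning tree), and a set containing `ê` iff its image is a forest of `Γ̂` through `ē` (extend
it to a spanning tree of `Γ̂` and delete the bridge `ē`). -/

namespace SimpleGraph

variable {V : Type*} {G : SimpleGraph V} {s : Set (Sym2 V)} {u v x : V}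

lemma mem_edgeSet_fromEdgeSet_of_mem {e : Sym2 V} (hs : e ∈ s) (hG : e ∈ G.edgeSet) :
    e ∈ (fromEdgeSet s).edgeSet := by
  rw [edgeSet_fromEdgeSet]
  exact ⟨hs, G.not_isDiag_of_mem_edgeSet hG⟩

lemma fromEdgeSet_insert_mk (u v : V) (s : Set (Sym2 V)) :
    fromEdgeSet (insert s(u, v) s) = fromEdgeSet s ⊔ edge u v := by
  rw [Set.insert_eq, fromEdgeSet_union, sup_comm]
  rfl

lemma Walk.mem_edgeSet_fromEdgeSet {p : G.Walk u v} (hp : ∀ e ∈ p.edges, e ∈ s) :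
    ∀ e ∈ p.edges, e ∈ (fromEdgeSet s).edgeSet := fun e he ↦
  mem_edgeSet_fromEdgeSet_of_mem (hp e he) (p.edges_subset_edgeSet he)

lemma Walk.reachable_fromEdgeSet (p : G.Walk u v) (hp : ∀ e ∈ p.edges, e ∈ s) :
    (fromEdgeSet s).Reachable u v :=
  (p.transfer _ (mem_edgeSet_fromEdgeSet hp)).reachable

lemma Reachable.exists_isPath_of_fromEdgeSet (hs : s ⊆ G.edgeSet)
    (h : (fromEdgeSet s).Reachable u v) :
    ∃ p : G.Walk u v, p.IsPath ∧ ∀ e ∈ p.edges, e ∈ s := by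
  classical
  obtain ⟨p, hp⟩ := h.some.toPath
  have hps : ∀ e ∈ p.edges, e ∈ s := fun e he ↦
    ((edgeSet_fromEdgeSet s).subset (p.edges_subset_edgeSet he)).1
  exact ⟨p.transfer G fun e he ↦ hs (hps e he), hp.transfer _, by simpa using hps⟩

lemma Reachable.reachable_or_of_sup_edge (h : (G ⊔ edge u v).Reachable x u) :
    G.Reachable x u ∨ G.Reachable x v := by
  rw [reachable_iff_reflTransGen] at h
  induction h using Relation.ReflTransGen.head_induction_on with
  | refl => exact .inl .rfl
  | head hxy _ ih =>
    rcases hxy with hxy | hxy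
    · exact ih.imp hxy.reachable.trans hxy.reachable.trans
    · obtain ⟨⟨rfl, rfl⟩ | ⟨rfl, rfl⟩, -⟩ := (edge_adj ..).mp hxy
      · exact .inl .rfl
      · exact .inr .rfl

lemma sup_edge_adj_self (hne : u ≠ v) : (G ⊔ edge u v).Adj u v :=
  .inr ((edge_adj ..).mpr ⟨.inl ⟨rfl, rfl⟩, hne⟩)

lemma IsAcyclic.edges_eq_of_fromEdgeSet (hs : (fromEdgeSet s).IsAcyclic) {p q : G.Walk u v}
    (hp : p.IsPath) (hq : q.IsPath) (hps : ∀ e ∈ p.edges, e ∈ s) (hqs : ∀ e ∈ q.edges, e ∈ s) :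
    p.edges = q.edges := by
  have := congrArg (fun r : (fromEdgeSet s).Path u v ↦ r.val.edges) <|
    (hs.subsingleton_path u v).elim ⟨_, hp.transfer (Walk.mem_edgeSet_fromEdgeSet hps)⟩
      ⟨_, hq.transfer (Walk.mem_edgeSet_fromEdgeSet hqs)⟩
  simpa using this

lemma IsAcyclic.not_reachable_deleteEdges (hG : G.IsAcyclic) (h : G.Adj u v) :
    ¬ (G.deleteEdges {s(u, v)}).Reachable u v :=
  isBridge_iff.mp (isAcyclic_iff_forall_isBridge.mp hG (e := s(u, v)) h)

lemma deleteEdges_sup_edge (h : G.Adj u v) : G.deleteEdges {s(u, v)} ⊔ edge u v = G := by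
  ext a b
  simp only [sup_adj, deleteEdges_adj, edge_adj, Set.mem_singleton_iff, Sym2.eq_iff]
  constructor
  · rintro (⟨hab, -⟩ | ⟨⟨rfl, rfl⟩ | ⟨rfl, rfl⟩, -⟩)
    exacts [hab, h, h.symm]
  · intro hab
    by_cases huv : a = u ∧ b = v ∨ a = v ∧ b = u
    · exact .inr ⟨huv, hab.ne⟩
    · exact .inl ⟨hab, huv⟩

end SimpleGraph

namespace Finset

lemma exists_eq_image_some_or_eq_insert_none {α : Type*} [DecidableEq α] (X : Finset (Option α)) :
    ∃ Y : Finset α, X = Y.image some ∨ X = insert none (Y.image some) := by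
  refine ⟨eraseNone X, ?_⟩
  rw [image_some_eraseNone]
  by_cases h : none ∈ X
  · exact .inr (insert_erase h).symm
  · exact .inl (erase_eq_of_notMem h).symm

end Finset

namespace DirichletPaper

open SimpleGraph

variable {V : Type*} {Γ : SimpleGraph V} {B : Finset V} {b₁ b₂ : V}
  {Y : Finset (Sym2 V)}

lemma isGrove_edgeFinset {H : SimpleGraph V} [Fintype H.edgeSet] (hHΓ : H ≤ Γ) (hH : H.IsAcyclic)
    (hreach : ∀ v, ∃ b ∈ B, H.Reachable v b) : IsGrove Γ B H.edgeFinset := by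
  simp only [IsGrove, coe_edgeFinset, fromEdgeSet_edgeSet]
  refine ⟨edgeSet_mono hHΓ, hH, fun v hv ↦ ?_, hreach⟩
  obtain ⟨b, hb, ⟨p⟩⟩ := hreach v
  cases p with
  | nil => exact absurd hb hv
  | cons h _ => exact ⟨_, mem_edgeFinset.mpr h, Sym2.mem_mk_left _ _⟩

lemma isCrossing_pair_iff [DecidableEq V] (hne : b₁ ≠ b₂) {C : Finset (Sym2 V)} :
    IsCrossing Γ {b₁, b₂} C ↔ ∃ p : Γ.Walk b₁ b₂, p.IsPath ∧ C = p.edges.toFinset := by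
  constructor
  · rintro ⟨i, j, p, hp, hi, hj, hij, -, rfl⟩
    simp only [Finset.mem_insert, Finset.mem_singleton] at hi hj
    rcases hi with rfl | rfl <;> rcases hj with rfl | rfl
    · exact absurd rfl hij
    · exact ⟨p, hp, rfl⟩
    · exact ⟨p.reverse, hp.reverse, by simp⟩
    · exact absurd rfl hij
  · rintro ⟨p, hp, rfl⟩
    exact ⟨b₁, b₂, p, hp, by simp, by simp, hne, fun v _ h₁ h₂ ↦ by simp [h₁, h₂], rfl⟩

lemma exists_isCrossing_subset_iff [DecidableEq V] (hne : b₁ ≠ b₂) {F : Finset (Sym2 V)}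
    (hFΓ : (F : Set (Sym2 V)) ⊆ Γ.edgeSet) :
    (∃ C, IsCrossing Γ {b₁, b₂} C ∧ C ⊆ F) ↔
      (fromEdgeSet (F : Set (Sym2 V))).Reachable b₁ b₂ := by
  constructor
  · rintro ⟨C, hC, hCF⟩
    obtain ⟨p, -, rfl⟩ := (isCrossing_pair_iff hne).mp hC
    exact p.reachable_fromEdgeSet fun e he ↦ hCF (List.mem_toFinset.mpr he)
  · intro h
    obtain ⟨p, hp, hpF⟩ := h.exists_isPath_of_fromEdgeSet hFΓ
    exact ⟨_, (isCrossing_pair_iff hne).mpr ⟨p, hp, rfl⟩,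
      fun e he ↦ hpF e (List.mem_toFinset.mp he)⟩

lemma sigma0_pair_iff [DecidableEq V] (hne : b₁ ≠ b₂) {F : Finset (Sym2 V)} :
    Sigma0 Γ {b₁, b₂} F ↔
      IsGrove Γ {b₁, b₂} F ∧ ¬ (fromEdgeSet (F : Set (Sym2 V))).Reachable b₁ b₂ :=
  and_congr_right fun hF ↦ by
    rw [← exists_isCrossing_subset_iff hne hF.1]
    simp only [not_exists, not_and]

lemma sigma1_pair_iff [DecidableEq V] (hne : b₁ ≠ b₂) {F : Finset (Sym2 V)} :
    Sigma1 Γ {b₁, b₂} F ↔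
      IsGrove Γ {b₁, b₂} F ∧ (fromEdgeSet (F : Set (Sym2 V))).Reachable b₁ b₂ := by
  refine and_congr_right fun hF ↦
    ⟨fun ⟨C, hC, _⟩ ↦ (exists_isCrossing_subset_iff hne hF.1).mp ⟨C, hC⟩, fun h ↦ ?_⟩
  obtain ⟨C, hC, hCF⟩ := (exists_isCrossing_subset_iff hne hF.1).mpr h
  refine ⟨C, ⟨hC, hCF⟩, fun D ⟨hD, hDF⟩ ↦ ?_⟩
  obtain ⟨p, hp, rfl⟩ := (isCrossing_pair_iff hne).mp hC
  obtain ⟨q, hq, rfl⟩ := (isCrossing_pair_iff hne).mp hD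
  rw [hF.2.1.edges_eq_of_fromEdgeSet hq hp (fun e he ↦ hDF (List.mem_toFinset.mpr he))
    (fun e he ↦ hCF (List.mem_toFinset.mpr he))]

lemma IsGrove.isAcyclic_of_subset {F : Finset (Sym2 V)} (hF : IsGrove Γ B F) (hYF : Y ⊆ F) :
    (fromEdgeSet (Y : Set (Sym2 V))).IsAcyclic :=
  hF.2.1.anti (fromEdgeSet_mono (by exact_mod_cast hYF))

lemma exists_sigma1_superset_iff [Fintype V] [DecidableEq V] (hΓ : Γ.Connected) (hne : b₁ ≠ b₂)
    (hY : (Y : Set (Sym2 V)) ⊆ Γ.edgeSet) :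
    (∃ F, Sigma1 Γ {b₁, b₂} F ∧ Y ⊆ F) ↔ (fromEdgeSet (Y : Set (Sym2 V))).IsAcyclic := by
  refine ⟨fun ⟨F, hF, hYF⟩ ↦ hF.1.isAcyclic_of_subset hYF, fun hY' ↦ ?_⟩
  obtain ⟨T, hYT, hTΓ, hT⟩ := hΓ.exists_isTree_le_of_le_of_isAcyclic
    (Γ.fromEdgeSet_le.mpr (Set.sdiff_subset.trans hY)) hY'
  refine ⟨T.edgeFinset, (sigma1_pair_iff hne).mpr ⟨isGrove_edgeFinset hTΓ hT.isAcyclic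
    fun v ↦ ⟨b₁, by simp, hT.connected.preconnected v b₁⟩, ?_⟩, fun e he ↦ ?_⟩
  · simpa using hT.connected.preconnected b₁ b₂
  · exact mem_edgeFinset.mpr (edgeSet_mono hYT (mem_edgeSet_fromEdgeSet_of_mem he (hY he)))

lemma exists_sigma0_superset_iff [Fintype V] [DecidableEq V] (hΓ : Γ.Connected) (hne : b₁ ≠ b₂)
    (hb : ¬ Γ.Adj b₁ b₂) (hY : (Y : Set (Sym2 V)) ⊆ Γ.edgeSet) :
    (∃ F, Sigma0 Γ {b₁, b₂} F ∧ Y ⊆ F) ↔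
      (fromEdgeSet (insert s(b₁, b₂) (Y : Set (Sym2 V)))).IsAcyclic := by
  rw [fromEdgeSet_insert_mk]
  constructor
  · rintro ⟨F, hF, hYF⟩
    rw [sigma0_pair_iff hne] at hF
    exact (hF.1.2.1.sup_edge_of_not_reachable hF.2).anti
      (sup_le_sup_right (fromEdgeSet_mono (by exact_mod_cast hYF)) _)
  · intro hY'
    obtain ⟨T, hYT, hTΓ, hT⟩ := (hΓ.mono le_sup_left).exists_isTree_le_of_le_of_isAcyclic
      (sup_le_sup_right (Γ.fromEdgeSet_le.mpr (Set.sdiff_subset.trans hY)) (edge b₁ b₂)) hY'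
    have hTb : T.Adj b₁ b₂ := hYT (sup_edge_adj_self hne)
    set T' := T.deleteEdges {s(b₁, b₂)}
    have hT'Γ : T' ≤ Γ := by
      intro u v huv
      rw [deleteEdges_adj] at huv
      obtain h | h := hTΓ huv.1
      · exact h
      · obtain ⟨⟨rfl, rfl⟩ | ⟨rfl, rfl⟩, -⟩ := (edge_adj ..).mp h
        exacts [absurd rfl huv.2, absurd Sym2.eq_swap huv.2]
    have hreach (v : V) : T'.Reachable v b₁ ∨ T'.Reachable v b₂ := by
      apply Reachable.reachable_or_of_sup_edge
      rw [deleteEdges_sup_edge hTb]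
      exact hT.connected.preconnected v b₁
    have hT' : T'.IsAcyclic := hT.isAcyclic.anti (deleteEdges_le _)
    have hgrove : IsGrove Γ {b₁, b₂} T'.edgeFinset := by
      refine isGrove_edgeFinset hT'Γ hT' fun v ↦ ?_
      rcases hreach v with h | h
      exacts [⟨b₁, by simp, h⟩, ⟨b₂, by simp, h⟩]
    refine ⟨T'.edgeFinset, (sigma0_pair_iff hne).mpr ⟨hgrove, ?_⟩, fun e he ↦ ?_⟩
    · simpa using hT.isAcyclic.not_reachable_deleteEdges hTb
    · have heT : e ∈ T.edgeSet :=
        edgeSet_mono (le_sup_left.trans hYT) (mem_edgeSet_fromEdgeSet_of_mem he (hY he))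
      refine mem_edgeFinset.mpr ((edgeSet_deleteEdges _).symm ▸ ⟨heT, ?_⟩ : e ∈ T'.edgeSet)
      rintro rfl
      exact hb (hY he)

lemma hatGraph_pair [DecidableEq V] (hne : b₁ ≠ b₂) : hatGraph Γ {b₁, b₂} = Γ ⊔ edge b₁ b₂ := by
  ext u v
  simp only [hatGraph, sup_adj, edge_adj, Finset.mem_insert, Finset.mem_singleton]
  constructor
  · rintro (h | ⟨rfl | rfl, rfl | rfl, huv⟩) <;> tauto
  · rintro (h | ⟨⟨rfl, rfl⟩ | ⟨rfl, rfl⟩, -⟩) <;> tauto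

lemma indep_image_some_iff [DecidableEq V] :
    Indep Γ B (Y.image some) ↔
      (∃ F, Sigma1 Γ B F ∧ Y ⊆ F) ∨ ∃ F, Sigma0 Γ B F ∧ Y ⊆ F := by
  simp only [Indep, Finset.subset_insert_iff_of_notMem (by simp : none ∉ Y.image some),
    Finset.image_subset_image_iff (Option.some_injective _)]

lemma indep_insert_none_iff [DecidableEq V] :
    Indep Γ B (insert none (Y.image some)) ↔ ∃ F, Sigma0 Γ B F ∧ Y ⊆ F := by
  simp only [Indep, Finset.insert_subset_iff, Finset.mem_insert_self, true_and,
    Finset.subset_insert_iff_of_notMem (by simp : none ∉ Y.image some),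
    Finset.image_subset_image_iff (Option.some_injective _)]
  simp only [Finset.mem_image, reduceCtorEq, and_false, exists_false, false_and, false_or]

lemma coe_subset_edgeSet_of_image_some_subset_ground [Fintype V] [DecidableEq V]
    (h : Y.image some ⊆ ground Γ) : (Y : Set (Sym2 V)) ⊆ Γ.edgeSet := by
  intro e he
  simpa [ground] using h (Finset.mem_image_of_mem some he)

lemma indepG_iff_isAcyclic {G : SimpleGraph V}
    (hY : (Y : Set (Sym2 V)) ⊆ G.edgeSet) :
    IndepG G Y ↔ (fromEdgeSet (Y : Set (Sym2 V))).IsAcyclic :=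
  and_iff_right hY

variable [Fintype V] [DecidableEq V] in
/-- **Dirichlet matroids with two boundary nodes are graphic**: if `|B| = 2`
with boundary nodes `b₁ ≠ b₂`, then the bijection `Ē → E(Γ̂)` fixing `E` and
sending `ê` to the new edge `ē = b₁b₂` identifies `M(N)` with the graphic
matroid of `Γ̂`: `X ⊆ Ē` is independent in `M(N)` iff its image is the edge set
of a forest in `Γ̂`. -/
theorem card_two_boundary_graphic
    (Γ : SimpleGraph V) (B : Finset V) (hN : IsNetwork Γ B) (hB : B.card = 2)
    (b₁ b₂ : V) (hb₁ : b₁ ∈ B) (hb₂ : b₂ ∈ B) (hne : b₁ ≠ b₂)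
    (X : Finset (Option (Sym2 V))) (hX : X ⊆ ground Γ) :
    Indep Γ B X ↔
      IndepG (hatGraph Γ B) (X.image (fun o => o.elim s(b₁, b₂) id)) := by
  obtain rfl : B = {b₁, b₂} := (Finset.eq_of_subset_of_card_le
    (by simp [Finset.insert_subset_iff, hb₁, hb₂]) (by rw [hB, Finset.card_pair hne])).symm
  have hb : ¬ Γ.Adj b₁ b₂ := hN.boundary_independent b₁ hb₁ b₂ hb₂
  rw [hatGraph_pair hne]
  obtain ⟨Y, rfl | rfl⟩ := Finset.exists_eq_image_some_or_eq_insert_none X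
  · have hY := coe_subset_edgeSet_of_image_some_subset_ground hX
    rw [indep_image_some_iff, exists_sigma1_superset_iff hN.connected hne hY]
    simp only [Finset.image_image, Function.comp_def, Option.elim_some, id_eq, Finset.image_id']
    rw [indepG_iff_isAcyclic (hY.trans (edgeSet_mono le_sup_left))]
    exact or_iff_left_of_imp fun ⟨F, hF, hYF⟩ ↦ hF.1.isAcyclic_of_subset hYF
  · have hY := coe_subset_edgeSet_of_image_some_subset_ground (Finset.insert_subset_iff.mp hX).2
    rw [indep_insert_none_iff, exists_sigma0_superset_iff hN.connected hne hb hY]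
    simp only [Finset.image_insert, Finset.image_image, Function.comp_def, Option.elim_some,
      Option.elim_none, id_eq, Finset.image_id']
    have hbY : ((insert s(b₁, b₂) Y : Finset (Sym2 V)) : Set (Sym2 V)) ⊆
        (Γ ⊔ edge b₁ b₂).edgeSet := by
      rw [Finset.coe_insert]
      exact Set.insert_subset ((Γ ⊔ edge b₁ b₂).mem_edgeSet.mpr (sup_edge_adj_self hne))
        (hY.trans (edgeSet_mono le_sup_left))
    rw [indepG_iff_isAcyclic hbY, Finset.coe_insert]

end DirichletPaper
end
end

section
/- Reduced broken circuit complex of the Dirichlet matroid: fix any linear order on Ē = E ∪ {ê} in which ê is the minimal element. Then for every X ⊆ E: X contains no broken circuit of M(N) if and only if X contains no broken circuit of the graphic matroid M(Γ) and X contains no crossing of N. -/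
open scoped BigOperators Classical

noncomputable section

namespace DirichletPaper

variable {V : Type*} [Fintype V] [DecidableEq V]

/-- With respect to a linear order on the ground set (encoded by an injection
`ord` into `ℕ`), a broken circuit of a matroid with circuit predicate `Circ` is
a set of the form `C ∖ {min C}` with `C` a circuit. -/
def IsBrokenCircuit {α : Type*} [DecidableEq α] (Circ : Finset α → Prop) (ord : α → ℕ)
    (X : Finset α) : Prop :=
  ∃ (C : Finset α) (m : α), Circ C ∧ m ∈ C ∧ (∀ y ∈ C, ord m ≤ ord y) ∧ X = C.erase m

end DirichletPaper

/-!
For a forest `F ⊆ E`, the set `F ∪ {ê}` is independent in `M(N)` iff `F` contains no crossing,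
and `F` itself is independent iff it contains at most one crossing: in both cases `F` grows into a
grove without acquiring new crossings. Because `ê` is the minimum, a crossing `C` (giving the
dependent set `C ∪ {ê}`) or a cycle of `Γ` inside `X` produces a circuit of `M(N)` whose broken
circuit lies in `X`. Conversely, let `D` be a circuit of `M(N)` whose broken circuit lies in `X`.
If `ê ∈ D`, then `D ∖ {ê}` is a forest containing a crossing. Otherwise `D` has a least edge `e`,
and either `D` contains a cycle, whose broken circuit lies in `D ∖ {e}`, or `D` is a forest with
two crossings; if both pass through `e`, deleting `e` from the forest leaves two of their end
points connected, which yields a crossing in `D ∖ {e}`.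
-/

namespace SimpleGraph

variable {V : Type*} {G : SimpleGraph V}

lemma Walk.exists_isPath_interior_notMem {S : Set V} {v t : V} (p : G.Walk v t)
    (hp : p.IsPath) (ht : t ∈ S) (hS : ∃ y ∈ p.support, y ∈ S ∧ y ≠ t) :
    ∃ (i j : V) (q : G.Walk i j), q.IsPath ∧ i ∈ S ∧ j ∈ S ∧ i ≠ j ∧
      ∀ w ∈ q.support, w ≠ i → w ≠ j → w ∉ S := by
  induction p with
  | nil =>
    obtain ⟨y, hy, -, hyt⟩ := hS
    exact absurd (List.mem_singleton.1 hy) hyt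
  | @cons u w t h q ih =>
    by_cases hq : ∃ y ∈ q.support, y ∈ S ∧ y ≠ t
    · exact ih hp.of_cons ht hq
    · push Not at hq
      obtain ⟨y, hy, hyS, hyt⟩ := hS
      obtain rfl : y = u := by
        rw [Walk.support_cons, List.mem_cons] at hy
        exact hy.resolve_right fun hy => hyt (hq y hy hyS)
      refine ⟨y, t, .cons h q, hp, hyS, ht, hyt, fun z hz hzy hzt hzS => hzt (hq z ?_ hzS)⟩
      rw [Walk.support_cons, List.mem_cons] at hz
      exact hz.resolve_left hzy

lemma Walk.IsTrail.reachable_deleteEdges_of_mem_edges {a b u x : V} {p : G.Walk a b}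
    (hp : p.IsTrail) (he : s(u, x) ∈ p.edges) :
    (G.deleteEdges {s(u, x)}).Reachable a u ∨ (G.deleteEdges {s(u, x)}).Reachable b u := by
  rw [Sym2.eq_swap] at he ⊢
  by_contra! h
  exact hp.not_mem_edges_of_not_reachable h.1 h.2 he

lemma IsAcyclic.reachable_deleteEdges_of_mem_edges (hG : G.IsAcyclic) {a b u x : V}
    {p : G.Walk a b} (hp : p.IsPath) (he : s(u, x) ∈ p.edges) :
    ((G.deleteEdges {s(u, x)}).Reachable a u ∧ (G.deleteEdges {s(u, x)}).Reachable b x) ∨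
      ((G.deleteEdges {s(u, x)}).Reachable a x ∧ (G.deleteEdges {s(u, x)}).Reachable b u) := by
  have hux : ¬ (G.deleteEdges {s(u, x)}).Reachable u x :=
    isBridge_iff.1 (isAcyclic_iff_forall_isBridge.1 hG (p.edges_subset_edgeSet he))
  have hx := hp.isTrail.reachable_deleteEdges_of_mem_edges (Sym2.eq_swap ▸ he)
  rw [Sym2.eq_swap] at hx
  rcases hp.isTrail.reachable_deleteEdges_of_mem_edges he with hau | hbu <;>
    rcases hx with hax | hbx
  · exact absurd (hau.symm.trans hax) hux
  · exact Or.inl ⟨hau, hbx⟩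
  · exact Or.inr ⟨hax, hbu⟩
  · exact absurd (hbu.symm.trans hbx) hux

/-- After deleting `s(u, x)`, each path joins the side of `u` to the side of `x`; unless the two
paths have the same endpoints (and then coincide, `G` being a forest), two distinct endpoints lie
on a common side. -/
lemma IsAcyclic.exists_reachable_deleteEdges_of_ne [DecidableEq V] (hG : G.IsAcyclic)
    {S : Set V} {a b c d u x : V} {p : G.Walk a b} (hp : p.IsPath) (hpe : s(u, x) ∈ p.edges)
    (ha : a ∈ S) (hb : b ∈ S) {q : G.Walk c d} (hq : q.IsPath) (hqe : s(u, x) ∈ q.edges)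
    (hc : c ∈ S) (hd : d ∈ S) (hpq : p.edges.toFinset ≠ q.edges.toFinset) :
    ∃ y ∈ S, ∃ z ∈ S, y ≠ z ∧ (G.deleteEdges {s(u, x)}).Reachable y z := by
  wlog hpo : (G.deleteEdges {s(u, x)}).Reachable a u ∧ (G.deleteEdges {s(u, x)}).Reachable b x
      generalizing a b p
  · have h := (hG.reachable_deleteEdges_of_mem_edges hp hpe).resolve_left hpo
    exact this hp.reverse (by simpa using hpe) hb ha (by simpa using hpq) ⟨h.2, h.1⟩
  wlog hqo : (G.deleteEdges {s(u, x)}).Reachable c u ∧ (G.deleteEdges {s(u, x)}).Reachable d x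
      generalizing c d q
  · have h := (hG.reachable_deleteEdges_of_mem_edges hq hqe).resolve_left hqo
    exact this hq.reverse (by simpa using hqe) hd hc (by simpa using hpq) ⟨h.2, h.1⟩
  by_cases hac : a = c
  · subst hac
    by_cases hbd : b = d
    · subst hbd
      exact absurd (congrArg (fun r : G.Path a b => r.1.edges.toFinset)
        ((hG.subsingleton_path a b).elim ⟨p, hp⟩ ⟨q, hq⟩)) hpq
    · exact ⟨b, hb, d, hd, hbd, hpo.2.trans hqo.2.symm⟩
  · exact ⟨a, ha, c, hc, hac, hpo.1.trans hqo.1.symm⟩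

lemma IsAcyclic.fromEdgeSet_insert_of_not_reachable {s : Set (Sym2 V)} {u x : V}
    (hacyc : (fromEdgeSet s).IsAcyclic) (hux : ¬(fromEdgeSet s).Reachable u x) :
    (fromEdgeSet (insert s(u, x) s)).IsAcyclic := by
  rw [Set.insert_eq, fromEdgeSet_union, sup_comm]
  exact hacyc.sup_edge_of_not_reachable hux

end SimpleGraph

namespace DirichletPaper

open SimpleGraph

section BrokenCircuit

variable {α : Type*}

lemma exists_subset_not_forall_ssubset {P : Finset α → Prop} {S : Finset α} (hS : ¬P S) :
    ∃ D ⊆ S, ¬P D ∧ ∀ Y ⊂ D, P Y := by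
  obtain ⟨D, hDS, hD⟩ := exists_minimal_le_of_wellFoundedLT (fun D => ¬P D) S hS
  exact ⟨D, hDS, hD.prop, fun Y hY => by_contra fun hPY => hY.2 (hD.2 hPY hY.1)⟩

variable [DecidableEq α] {ord : α → ℕ}

lemma erase_subset_erase_of_min (hord : Function.Injective ord) {C D : Finset α} (hDC : D ⊆ C)
    {m m' : α} (hmin : ∀ y ∈ C, ord m ≤ ord y) (hm' : m' ∈ D) (hmin' : ∀ y ∈ D, ord m' ≤ ord y) :
    D.erase m' ⊆ C.erase m := by
  intro y hy
  rw [Finset.mem_erase] at hy ⊢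
  refine ⟨?_, hDC hy.2⟩
  rintro rfl
  exact hy.1 (hord (le_antisymm (hmin _ (hDC hm')) (hmin' _ hy.2)))

lemma exists_isBrokenCircuit_subset_erase (hord : Function.Injective ord)
    {Circ : Finset α → Prop} {C S : Finset α} (hC : Circ C) (hCne : C.Nonempty) (hCS : C ⊆ S)
    {m : α} (hmin : ∀ y ∈ S, ord m ≤ ord y) :
    ∃ Y, IsBrokenCircuit Circ ord Y ∧ Y ⊆ S.erase m := by
  obtain ⟨m', hm', hmin'⟩ := C.exists_min_image ord hCne
  exact ⟨C.erase m', ⟨C, m', hC, hm', hmin', rfl⟩,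
    erase_subset_erase_of_min hord hCS hmin hm' hmin'⟩

end BrokenCircuit

section Crossing

variable {V : Type*} {Γ : SimpleGraph V} {B : Finset V}

lemma isGrove_of_forall_reachable {F : Finset (Sym2 V)} (hF : (F : Set (Sym2 V)) ⊆ Γ.edgeSet)
    (hacyc : (fromEdgeSet (F : Set (Sym2 V))).IsAcyclic)
    (hreach : ∀ v, ∃ b ∈ B, (fromEdgeSet (F : Set (Sym2 V))).Reachable v b) :
    IsGrove Γ B F := by
  refine ⟨hF, hacyc, fun v hv => ?_, hreach⟩
  obtain ⟨b, hb, ⟨p⟩⟩ := hreach v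
  cases p with
  | nil => exact absurd hb hv
  | cons h _ => exact ⟨_, (fromEdgeSet_adj _ |>.1 h).1, Sym2.mem_mk_left _ _⟩

lemma IsCircuitG.nonempty {D : Finset (Sym2 V)} (hD : IsCircuitG Γ D) : D.Nonempty :=
  Finset.nonempty_iff_ne_empty.2 fun h => hD.2.1 (h ▸ ⟨by simp, by simp⟩)

lemma exists_isCircuitG_subset {S : Finset (Sym2 V)} (h : ¬IndepG Γ S)
    (hS : (S : Set (Sym2 V)) ⊆ Γ.edgeSet) : ∃ D ⊆ S, IsCircuitG Γ D := by
  obtain ⟨D, hDS, hD, hDmin⟩ := exists_subset_not_forall_ssubset h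
  exact ⟨D, hDS, (Finset.coe_subset.2 hDS).trans hS, hD, hDmin⟩

variable [DecidableEq V]

lemma IsCrossing.nonempty {C : Finset (Sym2 V)} (hC : IsCrossing Γ B C) : C.Nonempty := by
  obtain ⟨i, j, p, -, -, -, hij, -, rfl⟩ := hC
  exact List.toFinset_nonempty_iff _ |>.2 fun h => hij (Walk.edges_eq_nil.1 h).eq

lemma IsCrossing.coe_subset_edgeSet {C : Finset (Sym2 V)} (hC : IsCrossing Γ B C) :
    (C : Set (Sym2 V)) ⊆ Γ.edgeSet := by
  obtain ⟨i, j, p, -, -, -, -, -, rfl⟩ := hC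
  exact fun e he => p.edges_subset_edgeSet (List.mem_toFinset.1 he)

lemma IsCrossing.exists_isPath_fromEdgeSet {C F : Finset (Sym2 V)} (hC : IsCrossing Γ B C)
    (hCF : C ⊆ F) : ∃ (i j : V) (p : (fromEdgeSet (F : Set (Sym2 V))).Walk i j),
      p.IsPath ∧ i ∈ B ∧ j ∈ B ∧ C = p.edges.toFinset := by
  obtain ⟨i, j, p, hp, hi, hj, -, -, rfl⟩ := hC
  have hpF : ∀ e ∈ p.edges, e ∈ (fromEdgeSet (F : Set (Sym2 V))).edgeSet := fun e he => by
    rw [edgeSet_fromEdgeSet]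
    exact ⟨hCF (List.mem_toFinset.2 he), Γ.not_isDiag_of_mem_edgeSet (p.edges_subset_edgeSet he)⟩
  exact ⟨i, j, p.transfer _ hpF, hp.transfer hpF, hi, hj, by rw [Walk.edges_transfer]⟩

lemma exists_isCrossing_subset_of_reachable {F : Finset (Sym2 V)}
    (hF : (F : Set (Sym2 V)) ⊆ Γ.edgeSet) {i j : V} (hi : i ∈ B) (hj : j ∈ B) (hij : i ≠ j)
    (h : (fromEdgeSet (F : Set (Sym2 V))).Reachable i j) : ∃ C, IsCrossing Γ B C ∧ C ⊆ F := by
  obtain ⟨p, hp⟩ := h.exists_isPath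
  obtain ⟨i', j', q, hq, hi', hj', hij', hint⟩ :=
    p.exists_isPath_interior_notMem (S := B) hp hj ⟨i, p.start_mem_support, hi, hij⟩
  have hqF : ∀ e ∈ q.edges, e ∈ F := fun e he => by
    have := q.edges_subset_edgeSet he
    rw [edgeSet_fromEdgeSet] at this
    exact this.1
  have hqΓ : ∀ e ∈ q.edges, e ∈ Γ.edgeSet := fun e he => hF (hqF e he)
  refine ⟨q.edges.toFinset, ⟨i', j', q.transfer Γ hqΓ, hq.transfer hqΓ, hi', hj', hij', ?_, ?_⟩,
    fun e he => hqF e (List.mem_toFinset.1 he)⟩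
  · rw [Walk.support_transfer]
    exact hint
  · rw [Walk.edges_transfer]

lemma isCrossing_subset_of_subset_insert {F C : Finset (Sym2 V)} {u x : V}
    (hu : ¬∃ b ∈ B, (fromEdgeSet (F : Set (Sym2 V))).Reachable u b) (hC : IsCrossing Γ B C)
    (hCF : C ⊆ insert s(u, x) F) : C ⊆ F := by
  obtain ⟨i, j, p, hp, hi, hj, rfl⟩ := hC.exists_isPath_fromEdgeSet hCF
  intro e he
  refine (Finset.mem_insert.1 (hCF he)).resolve_left ?_
  rintro rfl
  have hle : (fromEdgeSet ((insert s(u, x) F : Finset (Sym2 V)) : Set (Sym2 V))).deleteEdges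
      {s(u, x)} ≤ fromEdgeSet (F : Set (Sym2 V)) := by
    rw [deleteEdges_fromEdgeSet]
    exact fromEdgeSet_mono (by simp)
  rcases hp.isTrail.reachable_deleteEdges_of_mem_edges (List.mem_toFinset.1 he) with hiu | hju
  · exact hu ⟨i, hi, (hiu.mono hle).symm⟩
  · exact hu ⟨j, hj, (hju.mono hle).symm⟩

lemma exists_isCrossing_subset_erase {A C₁ C₂ : Finset (Sym2 V)} {e : Sym2 V}
    (hA : IndepG Γ A) (hC₁ : IsCrossing Γ B C₁) (hC₂ : IsCrossing Γ B C₂) (h₁ : C₁ ⊆ A)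
    (h₂ : C₂ ⊆ A) (hne : C₁ ≠ C₂) (he₁ : e ∈ C₁) (he₂ : e ∈ C₂) :
    ∃ C, IsCrossing Γ B C ∧ C ⊆ A.erase e := by
  obtain ⟨a, b, p, hp, ha, hb, rfl⟩ := hC₁.exists_isPath_fromEdgeSet h₁
  obtain ⟨c, d, q, hq, hc, hd, rfl⟩ := hC₂.exists_isPath_fromEdgeSet h₂
  induction e using Sym2.ind with
  | _ u x =>
  obtain ⟨y, hy, z, hz, hyz, hr⟩ := hA.2.exists_reachable_deleteEdges_of_ne (S := B) hp
    (List.mem_toFinset.1 he₁) ha hb hq (List.mem_toFinset.1 he₂) hc hd hne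
  rw [deleteEdges_fromEdgeSet, ← Finset.coe_singleton, ← Finset.coe_sdiff,
    Finset.sdiff_singleton_eq_erase] at hr
  exact exists_isCrossing_subset_of_reachable
    ((Finset.coe_subset.2 (Finset.erase_subset _ _)).trans hA.1) hy hz hyz hr

lemma Indep.subset {X Y : Finset (Option (Sym2 V))} (hY : Indep Γ B Y) (hXY : X ⊆ Y) :
    Indep Γ B X :=
  hY.imp (fun ⟨F, hF, hYF⟩ => ⟨F, hF, hXY.trans hYF⟩) fun ⟨F, hF, hYF⟩ => ⟨F, hF, hXY.trans hYF⟩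

lemma indepG_of_indep_image_some {A : Finset (Sym2 V)} (hA : Indep Γ B (A.image some)) :
    IndepG Γ A := by
  obtain ⟨F, hF, hAF⟩ : ∃ F, IsGrove Γ B F ∧ A ⊆ F := by
    rcases hA with ⟨F, hF, hAF⟩ | ⟨F, hF, hAF⟩
    · exact ⟨F, hF.1, (Finset.image_subset_image_iff (Option.some_injective _)).1 hAF⟩
    · exact ⟨F, hF.1, fun e he => by simpa using hAF (Finset.mem_image_of_mem some he)⟩
  exact ⟨(Finset.coe_subset.2 hAF).trans hF.1,
    hF.2.1.anti (fromEdgeSet_mono (Finset.coe_subset.2 hAF))⟩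

lemma not_indep_insert_none_of_isCrossing {C : Finset (Sym2 V)} (hC : IsCrossing Γ B C) :
    ¬Indep Γ B (insert none (C.image some)) := by
  rintro (⟨F, -, hCF⟩ | ⟨F, hF, hCF⟩)
  · simpa using hCF (Finset.mem_insert_self none _)
  · exact hF.2 C hC fun e he => by
      simpa using hCF (Finset.mem_insert_of_mem (Finset.mem_image_of_mem some he))

end Crossing

section Matroid

variable {V : Type*} [Fintype V] [DecidableEq V] {Γ : SimpleGraph V} {B : Finset V}

/-- Take a maximal such extension: were some vertex cut off from `B`, an edge of `Γ` leaving its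
component towards `B` could still be added. -/
theorem exists_isGrove_superset (hN : IsNetwork Γ B) {F₀ : Finset (Sym2 V)}
    (hF₀ : IndepG Γ F₀) :
    ∃ F, IsGrove Γ B F ∧ F₀ ⊆ F ∧ ∀ C, IsCrossing Γ B C → C ⊆ F → C ⊆ F₀ := by
  let good : Finset (Finset (Sym2 V)) := Finset.univ.filter fun F =>
    F₀ ⊆ F ∧ IndepG Γ F ∧ ∀ C, IsCrossing Γ B C → C ⊆ F → C ⊆ F₀
  obtain ⟨F, hF, hFmax⟩ := good.exists_max_image Finset.card
    ⟨F₀, Finset.mem_filter.2 ⟨Finset.mem_univ _, subset_rfl, hF₀, fun _ _ h => h⟩⟩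
  obtain ⟨hF₀F, ⟨hFE, hFacyc⟩, hFcr⟩ := (Finset.mem_filter.1 hF).2
  refine ⟨F, isGrove_of_forall_reachable hFE hFacyc ?_, hF₀F, hFcr⟩
  by_contra! ⟨v, hv⟩
  obtain ⟨b, hb⟩ := Finset.card_pos.1 (zero_lt_two.trans_le hN.two_le_card)
  obtain ⟨d, -, hu, hx⟩ := (hN.connected v b).some.exists_boundary_dart
    {w | ¬∃ b ∈ B, (fromEdgeSet (F : Set (Sym2 V))).Reachable w b} (by simpa using hv)
    (by simpa using ⟨b, hb, Reachable.refl b⟩)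
  simp only [Set.mem_ofPred_eq, not_not] at hu hx
  have hux : ¬(fromEdgeSet (F : Set (Sym2 V))).Reachable d.fst d.snd := fun h =>
    hu (hx.imp fun _ ⟨hb, hr⟩ => ⟨hb, h.trans hr⟩)
  have hnew : s(d.fst, d.snd) ∉ F := fun h =>
    hux (fromEdgeSet_adj _ |>.2 ⟨h, d.adj.ne⟩).reachable
  have hinsert : insert s(d.fst, d.snd) F ∈ good := Finset.mem_filter.2
    ⟨Finset.mem_univ _, hF₀F.trans (Finset.subset_insert _ _),
      ⟨by simpa [Set.insert_subset_iff] using And.intro d.adj hFE,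
        by rw [Finset.coe_insert]; exact hFacyc.fromEdgeSet_insert_of_not_reachable hux⟩,
      fun C hC hCF => hFcr C hC (isCrossing_subset_of_subset_insert hu hC hCF)⟩
  have := hFmax _ hinsert
  rw [Finset.card_insert_of_notMem hnew] at this
  omega

lemma some_mem_ground {e : Sym2 V} : some e ∈ ground Γ ↔ e ∈ Γ.edgeSet := by
  simp [ground]

lemma insert_none_image_some_subset_ground {A : Finset (Sym2 V)}
    (hA : (A : Set (Sym2 V)) ⊆ Γ.edgeSet) : insert none (A.image some) ⊆ ground Γ :=
  Finset.insert_subset_insert _ (Finset.image_subset_image fun e he => by simpa using hA he)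

lemma indep_insert_none_of_forall_not_isCrossing (hN : IsNetwork Γ B) {A : Finset (Sym2 V)}
    (hA : IndepG Γ A) (hcr : ∀ C, IsCrossing Γ B C → ¬C ⊆ A) :
    Indep Γ B (insert none (A.image some)) := by
  obtain ⟨F, hF, hAF, hFcr⟩ := exists_isGrove_superset hN hA
  exact Or.inr ⟨F, ⟨hF, fun C hC hCF => hcr C hC (hFcr C hC hCF)⟩,
    Finset.insert_subset_insert _ (Finset.image_subset_image hAF)⟩

lemma indep_image_some_of_isCrossing_unique (hN : IsNetwork Γ B) {A : Finset (Sym2 V)}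
    (hA : IndepG Γ A)
    (hcr : ∀ C₁ C₂, IsCrossing Γ B C₁ → IsCrossing Γ B C₂ → C₁ ⊆ A → C₂ ⊆ A → C₁ = C₂) :
    Indep Γ B (A.image some) := by
  obtain ⟨F, hF, hAF, hFcr⟩ := exists_isGrove_superset hN hA
  by_cases h : ∃ C, IsCrossing Γ B C ∧ C ⊆ F
  · obtain ⟨C, hC, hCF⟩ := h
    exact Or.inl ⟨F, ⟨hF, C, ⟨hC, hCF⟩, fun C' ⟨hC', hC'F⟩ =>
      hcr C' C hC' hC (hFcr C' hC' hC'F) (hFcr C hC hCF)⟩, Finset.image_subset_image hAF⟩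
  · push Not at h
    exact Or.inr ⟨F, ⟨hF, h⟩, (Finset.image_subset_image hAF).trans (Finset.subset_insert _ _)⟩

lemma indep_empty (hN : IsNetwork Γ B) : Indep Γ B ∅ :=
  (indep_insert_none_of_forall_not_isCrossing hN (A := ∅) ⟨by simp, by simp⟩ fun _ hC h =>
    hC.nonempty.ne_empty (Finset.subset_empty.1 h)).subset (Finset.empty_subset _)

lemma IsCircuit.nonempty (hN : IsNetwork Γ B) {D : Finset (Option (Sym2 V))}
    (hD : IsCircuit Γ B D) : D.Nonempty :=
  Finset.nonempty_iff_ne_empty.2 fun h => hD.2.1 (h ▸ indep_empty hN)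

lemma exists_isCircuit_subset {S : Finset (Option (Sym2 V))} (hS : S ⊆ ground Γ)
    (h : ¬Indep Γ B S) : ∃ D ⊆ S, IsCircuit Γ B D := by
  obtain ⟨D, hDS, hD, hDmin⟩ := exists_subset_not_forall_ssubset h
  exact ⟨D, hDS, hDS.trans hS, hD, hDmin⟩

lemma exists_isBrokenCircuit_subset_erase_of_not_indep (hN : IsNetwork Γ B)
    {ord : Option (Sym2 V) → ℕ} (hord : Function.Injective ord) {S : Finset (Option (Sym2 V))}
    (hS : S ⊆ ground Γ) (h : ¬Indep Γ B S) {m : Option (Sym2 V)} (hmin : ∀ y ∈ S, ord m ≤ ord y) :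
    ∃ Y, IsBrokenCircuit (IsCircuit Γ B) ord Y ∧ Y ⊆ S.erase m := by
  obtain ⟨D, hDS, hD⟩ := exists_isCircuit_subset hS h
  exact exists_isBrokenCircuit_subset_erase hord hD (hD.nonempty hN) hDS hmin

lemma exists_isCrossing_subset_of_isCircuit_insert_none (hN : IsNetwork Γ B)
    {A : Finset (Sym2 V)} (hA : IsCircuit Γ B (insert none (A.image some))) :
    ∃ C, IsCrossing Γ B C ∧ C ⊆ A := by
  have hAindep : IndepG Γ A :=
    indepG_of_indep_image_some (hA.2.2 _ (Finset.ssubset_insert (by simp)))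
  by_contra! hcr
  exact hA.2.1 (indep_insert_none_of_forall_not_isCrossing hN hAindep hcr)

/-- If all crossings of the forest `A` pass through `e`, the crossing exchange makes the crossing
of `A` unique, and then `A` is independent in `M(N)`. -/
lemma exists_isCrossing_or_isBrokenCircuit_subset_erase (hN : IsNetwork Γ B)
    {ord : Sym2 V → ℕ} (hord : Function.Injective ord) {A : Finset (Sym2 V)}
    (hA : IsCircuit Γ B (A.image some)) {e : Sym2 V} (hmin : ∀ y ∈ A, ord e ≤ ord y) :
    (∃ C, IsCrossing Γ B C ∧ C ⊆ A.erase e) ∨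
      ∃ Y, IsBrokenCircuit (IsCircuitG Γ) ord Y ∧ Y ⊆ A.erase e := by
  by_cases hAindep : IndepG Γ A
  · left
    by_contra! hcr
    have hmem : ∀ C, IsCrossing Γ B C → C ⊆ A → e ∈ C := fun C hC hCA =>
      by_contra fun he => hcr C hC (Finset.subset_erase.2 ⟨hCA, he⟩)
    refine hA.2.1 (indep_image_some_of_isCrossing_unique hN hAindep
      fun C₁ C₂ hC₁ hC₂ h₁ h₂ => by_contra fun hne => ?_)
    obtain ⟨C, hC, hCA⟩ := exists_isCrossing_subset_erase hAindep hC₁ hC₂ h₁ h₂ hne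
      (hmem C₁ hC₁ h₁) (hmem C₂ hC₂ h₂)
    exact hcr C hC hCA
  · right
    have hAE : (A : Set (Sym2 V)) ⊆ Γ.edgeSet := fun a ha =>
      some_mem_ground.1 (hA.1 (Finset.mem_image_of_mem some ha))
    obtain ⟨D, hDA, hD⟩ := exists_isCircuitG_subset hAindep hAE
    exact exists_isBrokenCircuit_subset_erase hord hD hD.nonempty hDA hmin

end Matroid

variable {V : Type*} [Fintype V] [DecidableEq V]

theorem reduced_broken_circuit_complex_general
    (Γ : SimpleGraph V) (B : Finset V) (hN : IsNetwork Γ B)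
    (ord : Option (Sym2 V) → ℕ) (hord : Function.Injective ord)
    (hmin : ∀ o : Option (Sym2 V), ord none ≤ ord o)
    (X : Finset (Sym2 V)) :
    (∀ Y, IsBrokenCircuit (IsCircuit Γ B) ord Y → ¬ Y ⊆ X.image some) ↔
      ((∀ Y, IsBrokenCircuit (IsCircuitG Γ) (fun e => ord (some e)) Y → ¬ Y ⊆ X) ∧
       ∀ C, IsCrossing Γ B C → ¬ C ⊆ X) := by
  have hsome : Function.Injective (some : Sym2 V → Option (Sym2 V)) := Option.some_injective _
  constructor
  · refine fun h => ⟨?_, fun C hC hCX => ?_⟩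
    · rintro _ ⟨C, m, hC, -, hCmin, rfl⟩ hCX
      obtain ⟨Y, hY, hYC⟩ := exists_isBrokenCircuit_subset_erase_of_not_indep hN hord
        ((Finset.subset_insert _ _).trans (insert_none_image_some_subset_ground hC.1))
        (fun hi => hC.2.1 (indepG_of_indep_image_some hi)) (Finset.forall_mem_image.2 hCmin)
      rw [← Finset.image_erase hsome] at hYC
      exact h Y hY (hYC.trans (Finset.image_subset_image hCX))
    · obtain ⟨Y, hY, hYC⟩ := exists_isBrokenCircuit_subset_erase_of_not_indep hN hord
        (insert_none_image_some_subset_ground hC.coe_subset_edgeSet)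
        (not_indep_insert_none_of_isCrossing hC) fun y _ => hmin y
      rw [Finset.erase_insert (by simp)] at hYC
      exact h Y hY (hYC.trans (Finset.image_subset_image hCX))
  · rintro ⟨hG, hC⟩ _ ⟨D, m, hD, hmD, hDmin, rfl⟩ hDX
    by_cases hnone : none ∈ D
    · obtain rfl : m = none := hord (le_antisymm (hDmin _ hnone) (hmin m))
      obtain ⟨A, rfl⟩ : ∃ A, D = insert none (A.image some) :=
        ⟨Finset.eraseNone D, by rw [Finset.image_some_eraseNone, Finset.insert_erase hnone]⟩
      rw [Finset.erase_insert (by simp), Finset.image_subset_image_iff hsome] at hDX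
      obtain ⟨C, hC', hCA⟩ := exists_isCrossing_subset_of_isCircuit_insert_none hN hD
      exact hC C hC' (hCA.trans hDX)
    · obtain ⟨A, rfl⟩ : ∃ A, D = A.image some :=
        ⟨Finset.eraseNone D, by rw [Finset.image_some_eraseNone, Finset.erase_eq_of_notMem hnone]⟩
      obtain ⟨e, -, rfl⟩ := Finset.mem_image.1 hmD
      rw [← Finset.image_erase hsome, Finset.image_subset_image_iff hsome] at hDX
      have heA : ∀ y ∈ A, ord (some e) ≤ ord (some y) := fun y hy =>
        hDmin _ (Finset.mem_image_of_mem some hy)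
      rcases exists_isCrossing_or_isBrokenCircuit_subset_erase hN (hord.comp hsome) hD heA with
        ⟨C, hC', hCA⟩ | ⟨Y, hY, hYA⟩
      · exact hC C hC' (hCA.trans hDX)
      · exact hG Y hY (hYA.trans hDX)

/-- **Reduced broken circuit complex of the Dirichlet matroid** (Lemma 4.9 of
Lutz): fix a linear order on `Ē = E ∪ {ê}` with `ê` minimal. For `X ⊆ E`: `X`
contains no broken circuit of `M(N)` iff `X` contains no broken circuit of the
graphic matroid `M(Γ)` and `X` contains no crossing of `N`. -/
theorem reduced_broken_circuit_complex
    (Γ : SimpleGraph V) (B : Finset V) (hN : IsNetwork Γ B)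
    (ord : Option (Sym2 V) → ℕ) (hord : Function.Injective ord)
    (hmin : ∀ o : Option (Sym2 V), ord none ≤ ord o)
    (X : Finset (Sym2 V)) (hX : (X : Set (Sym2 V)) ⊆ Γ.edgeSet) :
    (∀ Y, IsBrokenCircuit (IsCircuit Γ B) ord Y → ¬ Y ⊆ X.image some) ↔
      ((∀ Y, IsBrokenCircuit (IsCircuitG Γ) (fun e => ord (some e)) Y → ¬ Y ⊆ X) ∧
       ∀ C, IsCrossing Γ B C → ¬ C ⊆ X) :=
  reduced_broken_circuit_complex_general Γ B hN ord hord hmin X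
end DirichletPaper
end
end
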